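/- Let (u,v) be C³ on the closure of Ω and P be C¹ on the closure of Ω, with ∂_x u + ∂_y v = 0 in Ω, u = v = 0 on {x = 0} ∪ {y = 0} ∪ {y = 2}, and on {x = L}: ∂_y u + ∂_x v = 0 and P = 2ε ∂_x u. Then ∫_Ω (−εΔu)(−∂_y v) + ∫_Ω (−εΔv)(∂_x v) + ∫_Ω ( (∂_x P)(−∂_y v) + (∂_y P)(∂_x v) ) = (ε/2) ∫₀² |∂_x v(0,y)|² dy + 2ε ∫₀² |∂_x u(L,y)|² dy. -/

import Mathlib

open MeasureTheory Set Real Function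

noncomputable section

/-- The channel domain `Ω = (0,L) × (0,2)`. -/
def Omg (L : ℝ) : Set (ℝ × ℝ) := Ioo (0:ℝ) L ×ˢ Ioo (0:ℝ) 2

/-- Partial derivative in the first (x) variable of a curried function. -/
def pdx (f : ℝ → ℝ → ℝ) : ℝ → ℝ → ℝ := fun x y => deriv (fun s => f s y) x

/-- Partial derivative in the second (y) variable of a curried function. -/
def pdy (f : ℝ → ℝ → ℝ) : ℝ → ℝ → ℝ := fun x y => deriv (fun t => f x t) y

/-- Laplacian `Δ = ∂ₓₓ + ∂_{yy}`. -/
def plap (f : ℝ → ℝ → ℝ) : ℝ → ℝ → ℝ := fun x y => pdx (pdx f) x y + pdy (pdy f) x y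

/-- Integral over `Ω`. -/
def intO (L : ℝ) (F : ℝ → ℝ → ℝ) : ℝ := ∫ p in Omg L, F p.1 p.2

/-- `L²(Ω)` norm. -/
def l2 (L : ℝ) (f : ℝ → ℝ → ℝ) : ℝ := Real.sqrt (intO L fun x y => (f x y)^2)

/-- `L^∞(Ω)` (sup) norm. -/
def supO (L : ℝ) (f : ℝ → ℝ → ℝ) : ℝ := sSup ((fun p : ℝ × ℝ => |f p.1 p.2|) '' Omg L)

/-- `|∇f|²`. -/
def gradSq (f : ℝ → ℝ → ℝ) (x y : ℝ) : ℝ := (pdx f x y)^2 + (pdy f x y)^2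

/-- Energy norm `‖u,v‖_E = ‖√ε ∇u‖_{L²(Ω)} + ‖√ε ∇v‖_{L²(Ω)}`. -/
def normE (ε L : ℝ) (u v : ℝ → ℝ → ℝ) : ℝ :=
  Real.sqrt (intO L fun x y => ε * gradSq u x y) + Real.sqrt (intO L fun x y => ε * gradSq v x y)

/-- Positivity norm `‖u,v‖_P = ‖√(u_s) ∇v‖_{L²(Ω)}`. -/
def normP (L : ℝ) (us v : ℝ → ℝ → ℝ) : ℝ :=
  Real.sqrt (intO L fun x y => us x y * gradSq v x y)

/-- The `X` norm `‖u,v‖_X = ‖u,v‖_E + ε^{γ/2}(‖√ε u‖_∞ + ‖√ε v‖_∞)`. -/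
def normX (ε γ L : ℝ) (u v : ℝ → ℝ → ℝ) : ℝ :=
  normE ε L u v + ε ^ (γ/2) *
    (supO L (fun x y => Real.sqrt ε * u x y) + supO L (fun x y => Real.sqrt ε * v x y))

/-- Linearized convection term `S_u`. -/
def Su (us vs u v : ℝ → ℝ → ℝ) (x y : ℝ) : ℝ :=
  us x y * pdx u x y + pdx us x y * u x y + pdy us x y * v x y + vs x y * pdy u x y

/-- Linearized convection term `S_v`. -/
def Sv (us vs u v : ℝ → ℝ → ℝ) (x y : ℝ) : ℝ :=
  us x y * pdx v x y + pdx vs x y * u x y + vs x y * pdy v x y + pdy vs x y * v x y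

/-- The `W^{100,∞}` norm of a function on `(0,2)`. -/
def W100 (h : ℝ → ℝ) : ℝ :=
  sSup { r : ℝ | ∃ j ≤ 100, ∃ y ∈ Ioo (0:ℝ) 2, r = |deriv^[j] h y| }

/-!
In `Ω`, where `∂ₓu = -∂_y v`, the integrand is the divergence of the field
`(F₁, F₂)` with `F₁ = ε/2 (u_y² - u_x² + v_y² - v_x²) - P v_y` and
`F₂ = P v_x - ε (u_x u_y + v_x v_y)`, so by the divergence theorem only boundary terms remain.
`F₂` vanishes on `y = 0, 2`, where `u_x = v_x = 0`. On `x = 0` we have `u_y = v_y = 0`, hence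
`u_x = 0` and `F₁ = -ε/2 v_x²`. On `x = L` the outflow conditions `u_y = -v_x`, `P = 2ε u_x`
together with `v_y = -u_x` give `F₁ = 2ε u_x²`.
-/

section PartialDerivatives

variable {f : ℝ → ℝ → ℝ}

theorem hasDerivAt_pdx (hf : ContDiff ℝ 1 (uncurry f)) (x y : ℝ) :
    HasDerivAt (fun s => f s y) (pdx f x y) x :=
  have h : DifferentiableAt ℝ (uncurry f ∘ fun s => (s, y)) x :=
    (hf.differentiable one_ne_zero (x, y)).comp x
      (differentiableAt_id.prodMk (differentiableAt_const y))
  h.hasDerivAt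

theorem hasDerivAt_pdy (hf : ContDiff ℝ 1 (uncurry f)) (x y : ℝ) :
    HasDerivAt (fun t => f x t) (pdy f x y) y :=
  have h : DifferentiableAt ℝ (uncurry f ∘ fun t => (x, t)) y :=
    (hf.differentiable one_ne_zero (x, y)).comp y
      ((differentiableAt_const x).prodMk differentiableAt_id)
  h.hasDerivAt

theorem pdx_eq_fderiv {n : WithTop ℕ∞} (hf : ContDiff ℝ n (uncurry f)) (hn : 1 ≤ n) (x y : ℝ) :
    pdx f x y = fderiv ℝ (uncurry f) (x, y) (1, 0) :=
  have h : HasDerivAt (uncurry f ∘ fun s => (s, y)) (fderiv ℝ (uncurry f) (x, y) (1, 0)) x :=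
    (hf.differentiable (zero_lt_one.trans_le hn).ne' (x, y)).hasFDerivAt.comp_hasDerivAt x
      ((hasDerivAt_id x).prodMk (hasDerivAt_const x y))
  h.deriv

theorem pdy_eq_fderiv {n : WithTop ℕ∞} (hf : ContDiff ℝ n (uncurry f)) (hn : 1 ≤ n) (x y : ℝ) :
    pdy f x y = fderiv ℝ (uncurry f) (x, y) (0, 1) :=
  have h : HasDerivAt (uncurry f ∘ fun t => (x, t)) (fderiv ℝ (uncurry f) (x, y) (0, 1)) y :=
    (hf.differentiable (zero_lt_one.trans_le hn).ne' (x, y)).hasFDerivAt.comp_hasDerivAt y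
      ((hasDerivAt_const y x).prodMk (hasDerivAt_id y))
  h.deriv

theorem contDiff_pdx {m n : WithTop ℕ∞} (hf : ContDiff ℝ n (uncurry f)) (hmn : m + 1 ≤ n) :
    ContDiff ℝ m (uncurry (pdx f)) := by
  have h : uncurry (pdx f) = fun p => fderiv ℝ (uncurry f) p (1, 0) :=
    funext fun p => pdx_eq_fderiv hf (le_add_self.trans hmn) p.1 p.2
  rw [h]
  exact (hf.fderiv_right hmn).clm_apply contDiff_const

theorem contDiff_pdy {m n : WithTop ℕ∞} (hf : ContDiff ℝ n (uncurry f)) (hmn : m + 1 ≤ n) :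
    ContDiff ℝ m (uncurry (pdy f)) := by
  have h : uncurry (pdy f) = fun p => fderiv ℝ (uncurry f) p (0, 1) :=
    funext fun p => pdy_eq_fderiv hf (le_add_self.trans hmn) p.1 p.2
  rw [h]
  exact (hf.fderiv_right hmn).clm_apply contDiff_const

theorem continuous_plap (hf : ContDiff ℝ 2 (uncurry f)) : Continuous (uncurry (plap f)) :=
  (contDiff_pdx (m := 0) (contDiff_pdx (m := 1) hf le_rfl) le_rfl).continuous.add
    (contDiff_pdy (m := 0) (contDiff_pdy (m := 1) hf le_rfl) le_rfl).continuous

theorem pdx_pdy_comm (hf : ContDiff ℝ 2 (uncurry f)) (x y : ℝ) :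
    pdx (pdy f) x y = pdy (pdx f) x y := by
  have hf' : ContDiff ℝ 1 (fderiv ℝ (uncurry f)) := hf.fderiv_right le_rfl
  have hsecond : HasFDerivAt (fderiv ℝ (uncurry f))
      (fderiv ℝ (fderiv ℝ (uncurry f)) (x, y)) (x, y) :=
    (hf'.differentiable one_ne_zero (x, y)).hasFDerivAt
  have hxy : pdx (pdy f) x y = fderiv ℝ (fderiv ℝ (uncurry f)) (x, y) (1, 0) (0, 1) := by
    have h : (fun s => pdy f s y) = fun s => fderiv ℝ (uncurry f) (s, y) (0, 1) :=
      funext fun s => pdy_eq_fderiv hf one_le_two s y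
    rw [pdx, h]
    exact ((ContinuousLinearMap.apply ℝ ℝ ((0, 1) : ℝ × ℝ)).hasFDerivAt.comp_hasDerivAt x
      (hsecond.comp_hasDerivAt x ((hasDerivAt_id x).prodMk (hasDerivAt_const x y)))).deriv
  have hyx : pdy (pdx f) x y = fderiv ℝ (fderiv ℝ (uncurry f)) (x, y) (0, 1) (1, 0) := by
    have h : (fun t => pdx f x t) = fun t => fderiv ℝ (uncurry f) (x, t) (1, 0) :=
      funext fun t => pdx_eq_fderiv hf one_le_two x t
    rw [pdy, h]
    exact ((ContinuousLinearMap.apply ℝ ℝ ((1, 0) : ℝ × ℝ)).hasFDerivAt.comp_hasDerivAt y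
      (hsecond.comp_hasDerivAt y ((hasDerivAt_const y x).prodMk (hasDerivAt_id y)))).deriv
  rw [hxy, hyx, (hf.contDiffAt.isSymmSndFDerivAt (by simp)).eq]

end PartialDerivatives

section Rectangle

variable {a b c d : ℝ}

theorem integral_Ioo_eq_sub_of_hasDerivAt {g g' : ℝ → ℝ} (hab : a ≤ b)
    (hg : ∀ t, HasDerivAt g (g' t) t) (hg' : Continuous g') :
    ∫ t in Ioo a b, g' t = g b - g a := by
  rw [← integral_Ioc_eq_integral_Ioo, ← intervalIntegral.integral_of_le hab]
  exact intervalIntegral.integral_eq_sub_of_hasDerivAt (fun t _ => hg t)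
    (hg'.intervalIntegrable a b)

theorem Continuous.integrableOn_Ioo_prod_Ioo {F : ℝ × ℝ → ℝ} (hF : Continuous F) :
    IntegrableOn F (Ioo a b ×ˢ Ioo c d) :=
  (hF.continuousOn.integrableOn_compact (isCompact_Icc.prod isCompact_Icc)).mono_set
    (prod_mono Ioo_subset_Icc_self Ioo_subset_Icc_self)

theorem setIntegral_Ioo_prod_Ioo_pdx {A : ℝ → ℝ → ℝ} (hab : a ≤ b)
    (hA : ContDiff ℝ 1 (uncurry A)) :
    ∫ p in Ioo a b ×ˢ Ioo c d, pdx A p.1 p.2 = ∫ y in Ioo c d, (A b y - A a y) := by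
  have hA' : Continuous fun p : ℝ × ℝ => pdx A p.1 p.2 :=
    (contDiff_pdx (m := 0) hA le_rfl).continuous
  have hint : IntegrableOn (fun q : ℝ × ℝ => pdx A q.2 q.1) (Ioo c d ×ˢ Ioo a b)
      (volume.prod volume) := by
    rw [← Measure.volume_eq_prod]
    exact (hA'.comp continuous_swap).integrableOn_Ioo_prod_Ioo
  rw [Measure.volume_eq_prod, ← setIntegral_prod_swap]
  refine (setIntegral_prod (fun q : ℝ × ℝ => pdx A q.2 q.1) hint).trans
    (setIntegral_congr_fun measurableSet_Ioo fun y _ => ?_)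
  exact integral_Ioo_eq_sub_of_hasDerivAt hab (fun x => hasDerivAt_pdx hA x y)
    (hA'.comp (continuous_id.prodMk continuous_const))

theorem setIntegral_Ioo_prod_Ioo_pdy {B : ℝ → ℝ → ℝ} (hcd : c ≤ d)
    (hB : ContDiff ℝ 1 (uncurry B)) :
    ∫ p in Ioo a b ×ˢ Ioo c d, pdy B p.1 p.2 = ∫ x in Ioo a b, (B x d - B x c) := by
  have hB' : Continuous fun p : ℝ × ℝ => pdy B p.1 p.2 :=
    (contDiff_pdy (m := 0) hB le_rfl).continuous
  have hint : IntegrableOn (fun p : ℝ × ℝ => pdy B p.1 p.2) (Ioo a b ×ˢ Ioo c d)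
      (volume.prod volume) := by
    rw [← Measure.volume_eq_prod]
    exact hB'.integrableOn_Ioo_prod_Ioo
  rw [Measure.volume_eq_prod, setIntegral_prod _ hint]
  refine setIntegral_congr_fun measurableSet_Ioo fun x _ => ?_
  exact integral_Ioo_eq_sub_of_hasDerivAt hcd (fun y => hasDerivAt_pdy hB x y)
    (hB'.comp (continuous_const.prodMk continuous_id))

theorem setIntegral_Ioo_prod_Ioo_pdx_add_pdy {A B : ℝ → ℝ → ℝ} (hab : a ≤ b) (hcd : c ≤ d)
    (hA : ContDiff ℝ 1 (uncurry A)) (hB : ContDiff ℝ 1 (uncurry B)) :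
    ∫ p in Ioo a b ×ˢ Ioo c d, (pdx A p.1 p.2 + pdy B p.1 p.2)
      = (∫ y in Ioo c d, (A b y - A a y)) + ∫ x in Ioo a b, (B x d - B x c) := by
  have hA' : Continuous fun p : ℝ × ℝ => pdx A p.1 p.2 :=
    (contDiff_pdx (m := 0) hA le_rfl).continuous
  have hB' : Continuous fun p : ℝ × ℝ => pdy B p.1 p.2 :=
    (contDiff_pdy (m := 0) hB le_rfl).continuous
  rw [integral_add hA'.integrableOn_Ioo_prod_Ioo hB'.integrableOn_Ioo_prod_Ioo,
    setIntegral_Ioo_prod_Ioo_pdx hab hA, setIntegral_Ioo_prod_Ioo_pdy hcd hB]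

end Rectangle

theorem intO_add {L : ℝ} {F G : ℝ → ℝ → ℝ} (hF : Continuous (uncurry F))
    (hG : Continuous (uncurry G)) :
    intO L (fun x y => F x y + G x y) = intO L F + intO L G :=
  integral_add hF.integrableOn_Ioo_prod_Ioo hG.integrableOn_Ioo_prod_Ioo

theorem closure_Omg {L : ℝ} (hL : 0 < L) : closure (Omg L) = Icc 0 L ×ˢ Icc 0 2 := by
  rw [Omg, closure_prod_eq, closure_Ioo hL.ne, closure_Ioo two_ne_zero.symm]

theorem deriv_eq_zero_of_forall_mem_Ioo {g : ℝ → ℝ} {a b t : ℝ} (h : ∀ s ∈ Ioo a b, g s = 0)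
    (ht : t ∈ Ioo a b) : deriv g t = 0 := by
  simpa using (show EqOn g (fun _ => 0) (Ioo a b) from h).deriv isOpen_Ioo ht

def multiplierFluxX (ε : ℝ) (u v P : ℝ → ℝ → ℝ) (x y : ℝ) : ℝ :=
  ε / 2 * (pdy u x y ^ 2 - pdx u x y ^ 2 + pdy v x y ^ 2 - pdx v x y ^ 2) - P x y * pdy v x y

def multiplierFluxY (ε : ℝ) (u v P : ℝ → ℝ → ℝ) (x y : ℝ) : ℝ :=
  P x y * pdx v x y - ε * (pdx u x y * pdy u x y + pdx v x y * pdy v x y)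

section MultiplierFlux

variable {ε L : ℝ} {u v P : ℝ → ℝ → ℝ}

theorem contDiff_multiplierFluxX (hu : ContDiff ℝ 2 (uncurry u)) (hv : ContDiff ℝ 2 (uncurry v))
    (hP : ContDiff ℝ 1 (uncurry P)) : ContDiff ℝ 1 (uncurry (multiplierFluxX ε u v P)) :=
  (contDiff_const.mul (((((contDiff_pdy hu le_rfl).pow 2).sub ((contDiff_pdx hu le_rfl).pow 2)).add
    ((contDiff_pdy hv le_rfl).pow 2)).sub ((contDiff_pdx hv le_rfl).pow 2))).sub
    (hP.mul (contDiff_pdy hv le_rfl))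

theorem contDiff_multiplierFluxY (hu : ContDiff ℝ 2 (uncurry u)) (hv : ContDiff ℝ 2 (uncurry v))
    (hP : ContDiff ℝ 1 (uncurry P)) : ContDiff ℝ 1 (uncurry (multiplierFluxY ε u v P)) :=
  (hP.mul (contDiff_pdx hv le_rfl)).sub (contDiff_const.mul
    (((contDiff_pdx hu le_rfl).mul (contDiff_pdy hu le_rfl)).add
      ((contDiff_pdx hv le_rfl).mul (contDiff_pdy hv le_rfl))))

theorem multiplier_integrand_eq_pdx_add_pdy (hu : ContDiff ℝ 2 (uncurry u))
    (hv : ContDiff ℝ 2 (uncurry v)) (hP : ContDiff ℝ 1 (uncurry P)) {x y : ℝ}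
    (hdiv : pdx u x y + pdy v x y = 0) :
    -(ε * plap u x y) * (-(pdy v x y)) + -(ε * plap v x y) * pdx v x y
        + (pdx P x y * (-(pdy v x y)) + pdy P x y * pdx v x y)
      = pdx (multiplierFluxX ε u v P) x y + pdy (multiplierFluxY ε u v P) x y := by
  have hux := contDiff_pdx (m := 1) hu le_rfl
  have huy := contDiff_pdy (m := 1) hu le_rfl
  have hvx := contDiff_pdx (m := 1) hv le_rfl
  have hvy := contDiff_pdy (m := 1) hv le_rfl
  have hX : pdx (multiplierFluxX ε u v P) x y
      = ε * (pdy u x y * pdx (pdy u) x y - pdx u x y * pdx (pdx u) x y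
          + pdy v x y * pdx (pdy v) x y - pdx v x y * pdx (pdx v) x y)
        - (pdx P x y * pdy v x y + P x y * pdx (pdy v) x y) := by
    refine HasDerivAt.deriv ?_
    convert (((((hasDerivAt_pdx huy x y).pow 2).sub ((hasDerivAt_pdx hux x y).pow 2)).add
      ((hasDerivAt_pdx hvy x y).pow 2)).sub ((hasDerivAt_pdx hvx x y).pow 2)).const_mul (ε / 2)
      |>.sub ((hasDerivAt_pdx hP x y).mul (hasDerivAt_pdx hvy x y)) using 1
    · rfl
    · norm_num
      ring
  have hY : pdy (multiplierFluxY ε u v P) x y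
      = pdy P x y * pdx v x y + P x y * pdy (pdx v) x y
        - ε * (pdy (pdx u) x y * pdy u x y + pdx u x y * pdy (pdy u) x y
          + pdy (pdx v) x y * pdy v x y + pdx v x y * pdy (pdy v) x y) := by
    refine HasDerivAt.deriv ?_
    convert ((hasDerivAt_pdy hP x y).mul (hasDerivAt_pdy hvx x y)).sub
      ((((hasDerivAt_pdy hux x y).mul (hasDerivAt_pdy huy x y)).add
        ((hasDerivAt_pdy hvx x y).mul (hasDerivAt_pdy hvy x y))).const_mul ε) using 1
    · rfl
    · ring
  rw [hX, hY, pdx_pdy_comm hu, pdx_pdy_comm hv, plap, plap]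
  linear_combination (ε * (pdx (pdx u) x y + pdy (pdy u) x y)) * hdiv

theorem intO_multiplier_eq_boundary_flux (hL : 0 ≤ L) (hu : ContDiff ℝ 2 (uncurry u))
    (hv : ContDiff ℝ 2 (uncurry v)) (hP : ContDiff ℝ 1 (uncurry P))
    (hdiv : ∀ p ∈ Omg L, pdx u p.1 p.2 + pdy v p.1 p.2 = 0) :
    intO L (fun x y => -(ε * plap u x y) * (-(pdy v x y)))
        + intO L (fun x y => -(ε * plap v x y) * pdx v x y)
        + intO L (fun x y => pdx P x y * (-(pdy v x y)) + pdy P x y * pdx v x y)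
      = (∫ y in Ioo 0 2, (multiplierFluxX ε u v P L y - multiplierFluxX ε u v P 0 y))
        + ∫ x in Ioo 0 L, (multiplierFluxY ε u v P x 2 - multiplierFluxY ε u v P x 0) := by
  have hvx := (contDiff_pdx (m := 0) hv (by norm_num)).continuous
  have hvy := (contDiff_pdy (m := 0) hv (by norm_num)).continuous
  have hT1 : Continuous fun p : ℝ × ℝ => -(ε * plap u p.1 p.2) * -pdy v p.1 p.2 :=
    (continuous_const.mul (continuous_plap hu)).neg.mul hvy.neg
  have hT2 : Continuous fun p : ℝ × ℝ => -(ε * plap v p.1 p.2) * pdx v p.1 p.2 :=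
    (continuous_const.mul (continuous_plap hv)).neg.mul hvx
  have hT3 : Continuous fun p : ℝ × ℝ =>
      pdx P p.1 p.2 * -pdy v p.1 p.2 + pdy P p.1 p.2 * pdx v p.1 p.2 :=
    ((contDiff_pdx (m := 0) hP le_rfl).continuous.mul hvy.neg).add
      ((contDiff_pdy (m := 0) hP le_rfl).continuous.mul hvx)
  rw [← intO_add, ← intO_add, ← setIntegral_Ioo_prod_Ioo_pdx_add_pdy hL zero_le_two
    (contDiff_multiplierFluxX hu hv hP) (contDiff_multiplierFluxY hu hv hP)]
  · exact setIntegral_congr_fun (measurableSet_Ioo.prod measurableSet_Ioo) fun p hp =>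
      multiplier_integrand_eq_pdx_add_pdy hu hv hP (hdiv p hp)
  exacts [hT1.add hT2, hT3, hT1, hT2]

theorem multiplierFluxX_right_sub_left (hL : 0 < L) (hu : ContDiff ℝ 1 (uncurry u))
    (hv : ContDiff ℝ 1 (uncurry v))
    (hdiv : ∀ p ∈ Omg L, pdx u p.1 p.2 + pdy v p.1 p.2 = 0)
    (hbcx0 : ∀ y ∈ Icc (0:ℝ) 2, u 0 y = 0 ∧ v 0 y = 0)
    (hbcL : ∀ y ∈ Icc (0:ℝ) 2, pdy u L y + pdx v L y = 0 ∧ P L y = 2 * ε * pdx u L y)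
    {y : ℝ} (hy : y ∈ Ioo 0 2) :
    multiplierFluxX ε u v P L y - multiplierFluxX ε u v P 0 y
      = ε / 2 * pdx v 0 y ^ 2 + 2 * ε * pdx u L y ^ 2 := by
  have hdivc : ∀ x ∈ Icc 0 L, pdx u x y + pdy v x y = 0 := fun x hx =>
    EqOn.closure (f := fun p : ℝ × ℝ => pdx u p.1 p.2 + pdy v p.1 p.2) (g := 0) hdiv
      ((contDiff_pdx (m := 0) hu le_rfl).continuous.add
        (contDiff_pdy (m := 0) hv le_rfl).continuous) continuous_const
      (show (x, y) ∈ closure (Omg L) by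
        rw [closure_Omg hL]; exact ⟨hx, Ioo_subset_Icc_self hy⟩)
  have hleft : ∀ t ∈ Ioo (0:ℝ) 2, u 0 t = 0 ∧ v 0 t = 0 := fun t ht =>
    hbcx0 t (Ioo_subset_Icc_self ht)
  have huy0 : pdy u 0 y = 0 := deriv_eq_zero_of_forall_mem_Ioo (fun t ht => (hleft t ht).1) hy
  have hvy0 : pdy v 0 y = 0 := deriv_eq_zero_of_forall_mem_Ioo (fun t ht => (hleft t ht).2) hy
  have hdiv0 := hdivc 0 (left_mem_Icc.mpr hL.le)
  have hdivL := hdivc L (right_mem_Icc.mpr hL.le)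
  obtain ⟨hstressL, hPL⟩ := hbcL y (Ioo_subset_Icc_self hy)
  have hux0 : pdx u 0 y = 0 := by linarith
  have hvyL : pdy v L y = -pdx u L y := by linarith
  have huyL : pdy u L y = -pdx v L y := by linarith
  rw [multiplierFluxX, multiplierFluxX, hux0, huy0, hvy0, hvyL, huyL, hPL]
  ring

theorem multiplierFluxY_top_sub_bottom
    (hbcy : ∀ x ∈ Icc (0:ℝ) L, u x 0 = 0 ∧ v x 0 = 0 ∧ u x 2 = 0 ∧ v x 2 = 0)
    {x : ℝ} (hx : x ∈ Ioo 0 L) :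
    multiplierFluxY ε u v P x 2 - multiplierFluxY ε u v P x 0 = 0 := by
  have hwall : ∀ s ∈ Ioo 0 L, u s 0 = 0 ∧ v s 0 = 0 ∧ u s 2 = 0 ∧ v s 2 = 0 := fun s hs =>
    hbcy s (Ioo_subset_Icc_self hs)
  have hux0 : pdx u x 0 = 0 := deriv_eq_zero_of_forall_mem_Ioo (fun s hs => (hwall s hs).1) hx
  have hvx0 : pdx v x 0 = 0 := deriv_eq_zero_of_forall_mem_Ioo (fun s hs => (hwall s hs).2.1) hx
  have hux2 : pdx u x 2 = 0 := deriv_eq_zero_of_forall_mem_Ioo (fun s hs => (hwall s hs).2.2.1) hx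
  have hvx2 : pdx v x 2 = 0 := deriv_eq_zero_of_forall_mem_Ioo (fun s hs => (hwall s hs).2.2.2) hx
  rw [multiplierFluxY, multiplierFluxY, hux0, hvx0, hux2, hvx2]
  ring

end MultiplierFlux

theorem stmt19_general (L ε : ℝ) (hL0 : 0 < L)
    (u v P : ℝ → ℝ → ℝ)
    (hu : ContDiff ℝ 3 (uncurry u)) (hv : ContDiff ℝ 3 (uncurry v))
    (hP : ContDiff ℝ 1 (uncurry P))
    (hdiv : ∀ p ∈ Omg L, pdx u p.1 p.2 + pdy v p.1 p.2 = 0)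
    (hbcx0 : ∀ y ∈ Icc (0:ℝ) 2, u 0 y = 0 ∧ v 0 y = 0)
    (hbcy : ∀ x ∈ Icc (0:ℝ) L, u x 0 = 0 ∧ v x 0 = 0 ∧ u x 2 = 0 ∧ v x 2 = 0)
    (hbcL : ∀ y ∈ Icc (0:ℝ) 2, pdy u L y + pdx v L y = 0 ∧ P L y = 2 * ε * pdx u L y) :
    intO L (fun x y => -(ε * plap u x y) * (-(pdy v x y)))
      + intO L (fun x y => -(ε * plap v x y) * pdx v x y)
      + intO L (fun x y => pdx P x y * (-(pdy v x y)) + pdy P x y * pdx v x y)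
    = (ε / 2) * (∫ y in Ioo (0:ℝ) 2, (pdx v 0 y)^2)
      + 2 * ε * ∫ y in Ioo (0:ℝ) 2, (pdx u L y)^2 := by
  have hu2 : ContDiff ℝ 2 (uncurry u) := hu.of_le (by norm_num)
  have hv2 : ContDiff ℝ 2 (uncurry v) := hv.of_le (by norm_num)
  have hslice {f : ℝ → ℝ → ℝ} (hf : ContDiff ℝ 2 (uncurry f)) (x : ℝ) :
      IntegrableOn (fun y => pdx f x y ^ 2) (Ioo 0 2) :=
    (((contDiff_pdx (m := 0) hf (by norm_num)).continuous.comp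
      (continuous_const.prodMk continuous_id)).pow 2).integrableOn_Icc.mono_set
      Ioo_subset_Icc_self
  rw [intO_multiplier_eq_boundary_flux hL0.le hu2 hv2 hP hdiv,
    setIntegral_congr_fun measurableSet_Ioo fun y hy =>
      multiplierFluxX_right_sub_left hL0 (hu2.of_le one_le_two) (hv2.of_le one_le_two)
        hdiv hbcx0 hbcL hy,
    setIntegral_congr_fun measurableSet_Ioo (g := fun _ => 0) fun x hx =>
      multiplierFluxY_top_sub_bottom hbcy hx,
    integral_zero, add_zero, integral_add ((hslice hv2 0).const_mul _)
      ((hslice hu2 L).const_mul _), integral_const_mul, integral_const_mul]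

/-- the identity for the viscous and pressure contributions under the
positivity multiplier `M = (−∂_y v, ∂_x v)`. -/
theorem stmt19 (L ε : ℝ) (hL0 : 0 < L) (hL1 : L ≤ 1) (hε0 : 0 < ε) (hε1 : ε < 1)
    (u v P : ℝ → ℝ → ℝ)
    (hu : ContDiff ℝ 3 (uncurry u)) (hv : ContDiff ℝ 3 (uncurry v))
    (hP : ContDiff ℝ 1 (uncurry P))
    (hdiv : ∀ p ∈ Omg L, pdx u p.1 p.2 + pdy v p.1 p.2 = 0)
    (hbcx0 : ∀ y ∈ Icc (0:ℝ) 2, u 0 y = 0 ∧ v 0 y = 0)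
    (hbcy : ∀ x ∈ Icc (0:ℝ) L, u x 0 = 0 ∧ v x 0 = 0 ∧ u x 2 = 0 ∧ v x 2 = 0)
    (hbcL : ∀ y ∈ Icc (0:ℝ) 2, pdy u L y + pdx v L y = 0 ∧ P L y = 2 * ε * pdx u L y) :
    intO L (fun x y => -(ε * plap u x y) * (-(pdy v x y)))
      + intO L (fun x y => -(ε * plap v x y) * pdx v x y)
      + intO L (fun x y => pdx P x y * (-(pdy v x y)) + pdy P x y * pdx v x y)
    = (ε / 2) * (∫ y in Ioo (0:ℝ) 2, (pdx v 0 y)^2)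
      + 2 * ε * ∫ y in Ioo (0:ℝ) 2, (pdx u L y)^2 :=
  stmt19_general L ε hL0 u v P hu hv hP hdiv hbcx0 hbcy hbcL
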